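/- Fix a parameter k* ≥ 0 and β > 0, and let G be an n-node graph. For every vertex u of G, the per-vertex sum f_u(G) = Σ_{v ≠ u} val_G({u,v}) satisfies | f_u(G) − d̄_G − (deg_G(u) − d̄_G)·wt_G(u) | ≤ 2·k_G·wt_G(u). -/

import Mathlib

open MeasureTheory Finset
open scoped Classical

noncomputable section

/-- Two `n`-node graphs are node-adjacent if every edge in the symmetric
difference of their edge sets is incident to a single vertex `i`. -/
def NodeAdjacent {n : ℕ} (G G' : SimpleGraph (Fin n)) : Prop :=
  ∃ i : Fin n, ∀ u v : Fin n, ¬ (G.Adj u v ↔ G'.Adj u v) → u = i ∨ v = i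

/-- `G` and `G'` are at node distance at most `c`: there is a path of length `c`
of consecutively node-adjacent graphs from `G` to `G'`. -/
def NodeDistLE {n : ℕ} (G G' : SimpleGraph (Fin n)) (c : ℕ) : Prop :=
  ∃ g : ℕ → SimpleGraph (Fin n), g 0 = G ∧ g c = G' ∧
    ∀ j < c, NodeAdjacent (g j) (g (j + 1))

/-- `(ε,δ)`-node-differential privacy for a randomized algorithm, viewed as a map
assigning to each graph a (probability) measure on the output space `R`. -/
def NodeDP {n : ℕ} {R : Type*} [MeasurableSpace R]
    (A : SimpleGraph (Fin n) → Measure R) (ε δ : ℝ) : Prop :=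
  ∀ G G' : SimpleGraph (Fin n), NodeAdjacent G G' → ∀ S : Set R, MeasurableSet S →
    ((A G) S).toReal ≤ Real.exp ε * ((A G') S).toReal + δ

/-- Number of edges of `G`. -/
def edgeCount {n : ℕ} (G : SimpleGraph (Fin n)) : ℕ := G.edgeSet.ncard

/-- The empirical edge density `p_G = |E| / C(n,2)`. -/
def edgeDensity {n : ℕ} (G : SimpleGraph (Fin n)) : ℝ :=
  (edgeCount G : ℝ) / (n.choose 2 : ℝ)

/-- Degree of a vertex. -/
def deg {n : ℕ} (G : SimpleGraph (Fin n)) (v : Fin n) : ℕ := (G.neighborSet v).ncard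

/-- Average degree `d̄_G = 2|E|/n  ( = (n-1)·p_G )`. -/
def avgDeg {n : ℕ} (G : SimpleGraph (Fin n)) : ℝ := 2 * (edgeCount G : ℝ) / n

/-- `G ∈ 𝒢_{n,k}` : every degree lies in `[d̄ - k, d̄ + k]`. -/
def Concentrated {n : ℕ} (G : SimpleGraph (Fin n)) (k : ℝ) : Prop :=
  ∀ v : Fin n, |(deg G v : ℝ) - avgDeg G| ≤ k

/-- The number of vertices whose degree lies outside `[d̄_G - k* - 3m, d̄_G + k* + 3m]`. -/
def farCount {n : ℕ} (G : SimpleGraph (Fin n)) (kstar : ℝ) (m : ℕ) : ℕ :=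
  {v : Fin n | kstar + 3 * (m : ℝ) < |(deg G v : ℝ) - avgDeg G|}.ncard

/-- `k_G` : the smallest positive integer `m` such that at most `m` vertices have
degree outside `[d̄_G - k* - 3m, d̄_G + k* + 3m]`. -/
def kOf {n : ℕ} (G : SimpleGraph (Fin n)) (kstar : ℝ) : ℕ :=
  sInf {m : ℕ | 0 < m ∧ farCount G kstar m ≤ m}

/-- `t_v` : the distance from `deg_G(v)` to the interval `I_G`. -/
def tDist {n : ℕ} (G : SimpleGraph (Fin n)) (kstar : ℝ) (v : Fin n) : ℝ :=
  max 0 (|(deg G v : ℝ) - avgDeg G| - (kstar + 3 * (kOf G kstar : ℝ)))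

/-- The weight `wt_G(v) = max(0, 1 - β t_v)`. -/
def wt {n : ℕ} (G : SimpleGraph (Fin n)) (kstar β : ℝ) (v : Fin n) : ℝ :=
  max 0 (1 - β * tDist G kstar v)

/-- The value of the pair `{u,v}`:
`val_G({u,v}) = wt_G({u,v})·x_{uv} + (1 - wt_G({u,v}))·p_G`,
where `wt_G({u,v}) = min(wt_G(u), wt_G(v))`. -/
def valPair {n : ℕ} (G : SimpleGraph (Fin n)) (kstar β : ℝ) (u v : Fin n) : ℝ :=
  min (wt G kstar β u) (wt G kstar β v) * (if G.Adj u v then 1 else 0)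
    + (1 - min (wt G kstar β u) (wt G kstar β v)) * edgeDensity G

/-- `f(G)` : the sum of `val_G({u,v})` over unordered pairs of distinct vertices. -/
def fEst {n : ℕ} (G : SimpleGraph (Fin n)) (kstar β : ℝ) : ℝ :=
  (∑ u : Fin n, ∑ v : Fin n, if u ≠ v then valPair G kstar β u v else 0) / 2

/-- `f_u(G) = Σ_{v ≠ u} val_G({u,v})`. -/
def fVert {n : ℕ} (G : SimpleGraph (Fin n)) (kstar β : ℝ) (u : Fin n) : ℝ :=
  ∑ v ∈ Finset.univ.erase u, valPair G kstar β u v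

/-- The smooth upper bound
`S(G) = sup_{ℓ ≥ 0} e^{-βℓ} · C·((k_G+ℓ+k*)(1+β(k_G+ℓ)) + 1/β)`. -/
def smoothS {n : ℕ} (G : SimpleGraph (Fin n)) (kstar β C : ℝ) : ℝ :=
  ⨆ ℓ : {x : ℝ // 0 ≤ x},
    Real.exp (-β * (ℓ : ℝ)) *
      (C * (((kOf G kstar : ℝ) + (ℓ : ℝ) + kstar) * (1 + β * ((kOf G kstar : ℝ) + (ℓ : ℝ))) + 1 / β))

/-- The Student's t-distribution with 3 degrees of freedom, as a measure on `ℝ`. -/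
def studentT3 : Measure ℝ :=
  MeasureTheory.volume.withDensity
    (fun z => ENNReal.ofReal (2 / (Real.sqrt 3 * Real.pi * (1 + z ^ 2 / 3) ^ 2)))

/-- The disjoint union of cliques on `Fin n` given by a block-assignment `π`. -/
def cliqueUnion {n i : ℕ} (π : Fin n → Fin i) : SimpleGraph (Fin n) where
  Adj u v := u ≠ v ∧ π u = π v
  symm := ⟨fun u v h => ⟨Ne.symm h.1, h.2.symm⟩⟩
  loopless := ⟨fun u h => h.1 rfl⟩


/-! The sum `f_u(G) - d̄_G - (deg_G(u) - d̄_G)·wt_G(u)` equals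
`Σ_{v ≠ u} (min(wt_G(u), wt_G(v)) - wt_G(u))·(x_{uv} - p_G)`,
because `Σ_{v ≠ u} x_{uv} = deg_G(u)` and `Σ_{v ≠ u} p_G = (n - 1)·p_G = d̄_G`.
A vertex `v` with degree in `I_G` has weight `1`, so its term vanishes; only the at most `k_G`
vertices outside `I_G` contribute, each by at most `wt_G(u)`. -/

lemma abs_sum_le_card_mul_of_eq_zero_off {ι : Type*} {s T : Finset ι} {f : ι → ℝ} {c : ℝ}
    (hf : ∀ i ∈ s, i ∉ T → f i = 0) (hc : ∀ i ∈ s, |f i| ≤ c) (hc0 : 0 ≤ c) :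
    |∑ i ∈ s, f i| ≤ T.card * c := by
  rw [← Finset.sum_filter_of_ne (p := fun i => i ∈ T)
    fun i hi hfi => by_contra fun hiT => hfi (hf i hi hiT)]
  calc |∑ i ∈ s with i ∈ T, f i|
      ≤ ∑ i ∈ s with i ∈ T, |f i| := Finset.abs_sum_le_sum_abs _ _
    _ ≤ (s.filter fun i => i ∈ T).card * c := by
      simpa using Finset.sum_le_card_nsmul _ _ c fun i hi => hc i (Finset.mem_filter.mp hi).1
    _ ≤ T.card * c := by
      gcongr
      exact fun i hi => (Finset.mem_filter.mp hi).2

lemma abs_min_sub_mul_le {a b c : ℝ} (ha : 0 ≤ a) (hb : 0 ≤ b) (hc : |c| ≤ 1) :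
    |(min a b - a) * c| ≤ a := by
  have hmin : |min a b - a| ≤ a := by
    rw [abs_le]
    constructor <;> linarith [min_le_left a b, le_min ha hb]
  calc |(min a b - a) * c| = |min a b - a| * |c| := abs_mul _ _
    _ ≤ a * 1 := mul_le_mul hmin hc (abs_nonneg c) ha
    _ = a := mul_one a

lemma abs_ite_one_zero_sub_le_one (P : Prop) [Decidable P] {p : ℝ} (hp0 : 0 ≤ p) (hp1 : p ≤ 1) :
    |(if P then (1 : ℝ) else 0) - p| ≤ 1 := by
  rw [abs_le]
  split_ifs <;> constructor <;> linarith

section Graph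

variable {n : ℕ} (G : SimpleGraph (Fin n))

lemma edgeCount_eq_card_edgeFinset : edgeCount G = G.edgeFinset.card := by
  rw [edgeCount, ← SimpleGraph.coe_edgeFinset, Set.ncard_coe_finset]

lemma edgeCount_le_choose_two : edgeCount G ≤ n.choose 2 := by
  simpa [edgeCount_eq_card_edgeFinset] using G.card_edgeFinset_le_card_choose_two

lemma edgeDensity_nonneg : 0 ≤ edgeDensity G := by
  unfold edgeDensity
  positivity

lemma edgeDensity_le_one : edgeDensity G ≤ 1 :=
  div_le_one_of_le₀ (by exact_mod_cast edgeCount_le_choose_two G) (Nat.cast_nonneg _)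

lemma deg_eq_degree (v : Fin n) : deg G v = G.degree v := by
  rw [deg, Set.ncard_eq_toFinset_card', Set.toFinset_card, SimpleGraph.card_neighborSet_eq_degree]

lemma sum_erase_ite_adj_eq_deg (u : Fin n) :
    ∑ v ∈ Finset.univ.erase u, (if G.Adj u v then (1 : ℝ) else 0) = deg G u := by
  rw [Finset.sum_erase _ (by simp), Finset.sum_boole, deg_eq_degree, SimpleGraph.degree,
    SimpleGraph.neighborFinset_eq_filter]

lemma sum_erase_edgeDensity_eq_avgDeg (u : Fin n) :
    ∑ _v ∈ Finset.univ.erase u, edgeDensity G = avgDeg G := by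
  rw [Finset.sum_const, Finset.card_erase_of_mem (Finset.mem_univ u), Finset.card_univ,
    Fintype.card_fin, nsmul_eq_mul, edgeDensity, avgDeg]
  have hn : 1 ≤ n := Fin.pos u
  rcases hn.eq_or_lt with rfl | hn2
  · have : edgeCount G = 0 := Nat.le_zero.mp (edgeCount_le_choose_two G)
    simp [this]
  · have hn1 : (n : ℝ) - 1 ≠ 0 := sub_ne_zero.mpr (by exact_mod_cast hn2.ne')
    rw [Nat.cast_sub hn, Nat.cast_one, Nat.cast_choose_two]
    field_simp

end Graph

section Weight

variable {n : ℕ} (G : SimpleGraph (Fin n)) (kstar : ℝ)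

lemma card_filter_far_kOf_le :
    (Finset.univ.filter fun v => kstar + 3 * (kOf G kstar : ℝ) < |(deg G v : ℝ) - avgDeg G|).card
      ≤ kOf G kstar := by
  have hne : {m : ℕ | 0 < m ∧ farCount G kstar m ≤ m}.Nonempty := by
    refine ⟨n + 1, n.succ_pos, ?_⟩
    calc farCount G kstar (n + 1) ≤ Nat.card (Fin n) := Set.ncard_le_card _
      _ ≤ n + 1 := by simp
  have := (Nat.sInf_mem hne).2
  rwa [farCount, Set.ncard_eq_toFinset_card', Set.toFinset_ofPred] at this

variable (β : ℝ)

lemma wt_nonneg (v : Fin n) : 0 ≤ wt G kstar β v := le_max_left _ _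

lemma wt_le_one (hβ : 0 ≤ β) (v : Fin n) : wt G kstar β v ≤ 1 :=
  max_le zero_le_one (sub_le_self 1 (mul_nonneg hβ (le_max_left _ _)))

lemma wt_eq_one_of_abs_le {v : Fin n}
    (hv : |(deg G v : ℝ) - avgDeg G| ≤ kstar + 3 * (kOf G kstar : ℝ)) :
    wt G kstar β v = 1 := by
  have ht : tDist G kstar v = 0 := max_eq_left (by linarith)
  simp [wt, ht]

lemma fVert_sub_eq_sum (u : Fin n) :
    fVert G kstar β u - avgDeg G - ((deg G u : ℝ) - avgDeg G) * wt G kstar β u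
      = ∑ v ∈ Finset.univ.erase u,
          (min (wt G kstar β u) (wt G kstar β v) - wt G kstar β u) *
            ((if G.Adj u v then (1 : ℝ) else 0) - edgeDensity G) := by
  rw [← sum_erase_ite_adj_eq_deg, ← sum_erase_edgeDensity_eq_avgDeg G u, fVert,
    ← Finset.sum_sub_distrib, ← Finset.sum_sub_distrib, Finset.sum_mul, ← Finset.sum_sub_distrib]
  refine Finset.sum_congr rfl fun v _ => ?_
  rw [valPair]
  ring

end Weight

theorem fVert_approx_general {n : ℕ} (kstar β : ℝ) (hβ : 0 < β)
    (G : SimpleGraph (Fin n)) (u : Fin n) :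
    |fVert G kstar β u - avgDeg G - ((deg G u : ℝ) - avgDeg G) * wt G kstar β u| ≤
      2 * (kOf G kstar : ℝ) * wt G kstar β u := by
  have hwu := wt_nonneg G kstar β u
  rw [fVert_sub_eq_sum]
  calc _ ≤ (Finset.univ.filter fun v =>
          kstar + 3 * (kOf G kstar : ℝ) < |(deg G v : ℝ) - avgDeg G|).card * wt G kstar β u := by
        refine abs_sum_le_card_mul_of_eq_zero_off (fun v _ hv => ?_) (fun v _ => ?_) hwu
        · rw [wt_eq_one_of_abs_le G kstar β (v := v) (by simpa using hv),
            min_eq_left (wt_le_one G kstar β hβ.le u), sub_self, zero_mul]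
        · exact abs_min_sub_mul_le hwu (wt_nonneg G kstar β v)
            (abs_ite_one_zero_sub_le_one _ (edgeDensity_nonneg G) (edgeDensity_le_one G))
    _ ≤ kOf G kstar * wt G kstar β u := by
        gcongr
        exact_mod_cast card_filter_far_kOf_le G kstar
    _ ≤ 2 * (kOf G kstar : ℝ) * wt G kstar β u := by
        have : (0 : ℝ) ≤ kOf G kstar := Nat.cast_nonneg _
        nlinarith

/-- the per-vertex sum satisfies
`f_u(G) = d̄_G + (deg_G(u) - d̄_G)·wt_G(u) ± 2 k_G wt_G(u)`. -/
theorem fVert_approx {n : ℕ} (kstar β : ℝ) (hkstar : 0 ≤ kstar) (hβ : 0 < β)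
    (G : SimpleGraph (Fin n)) (u : Fin n) :
    |fVert G kstar β u - avgDeg G - ((deg G u : ℝ) - avgDeg G) * wt G kstar β u| ≤
      2 * (kOf G kstar : ℝ) * wt G kstar β u :=
  fVert_approx_general kstar β hβ G u

end
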